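/- arXiv:2405.08768 — 5 statements merged into one kernel-verified Lean document; each statement's English description precedes it below -/
import Mathlib

section
/- Let H, W, k be positive integers with k ∣ H and k ∣ W, let w : ℤ → ℤ → ℂ be an arbitrary interpolation kernel, and let X : ℤ → ℤ → ℂ be an image. Define the k-fold down-sampled image D(X)(x',y') := Σ_{s=0}^{k-1} Σ_{t=0}^{k-1} w(s,t)·X(kx'+s, ky'+t), and the kernel frequency response β(u',v') := Σ_{s=0}^{k-1} Σ_{t=0}^{k-1} w(s,t)·exp(2πi(u's/(2H) + v't/(2W))). Then for all integers u, v, the 2D discrete Fourier transform of D(X) on the 2(H/k)×2(W/k) grid satisfies the aliasing formula F_{D(X)}(u,v) = (1/k²) · Σ_{a=0}^{k-1} Σ_{b=0}^{k-1} β(u + 2aH/k, v + 2bW/k) · F_X(u + 2aH/k, v + 2bW/k), where F_X is the 2D discrete Fourier transform of X on the 2H×2W grid (evaluated at all integer frequencies via its defining, periodic, formula). -/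
/-- The 2D discrete Fourier transform of an image `Z : ℤ → ℤ → ℂ` on the `2M × 2N` grid:
`F_Z(u,v) = ∑_{x=-M}^{M-1} ∑_{y=-N}^{N-1} Z(x,y)·exp(-2πi(ux/(2M) + vy/(2N)))`. -/
noncomputable def dft (M N : ℤ) (Z : ℤ → ℤ → ℂ) (u v : ℤ) : ℂ :=
  ∑ x ∈ Finset.Icc (-M) (M - 1), ∑ y ∈ Finset.Icc (-N) (N - 1),
    Z x y * Complex.exp (-(2 * (Real.pi : ℂ) * Complex.I) *
      ((u : ℂ) * (x : ℂ) / (2 * (M : ℂ)) + (v : ℂ) * (y : ℂ) / (2 * (N : ℂ))))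

/-- The `k`-fold down-sampled image with interpolation kernel `w`:
`D(X)(x',y') = ∑_{s=0}^{k-1} ∑_{t=0}^{k-1} w(s,t)·X(kx'+s, ky'+t)`. -/
noncomputable def downsample (k : ℤ) (w X : ℤ → ℤ → ℂ) (x' y' : ℤ) : ℂ :=
  ∑ s ∈ Finset.Icc (0 : ℤ) (k - 1), ∑ t ∈ Finset.Icc (0 : ℤ) (k - 1),
    w s t * X (k * x' + s) (k * y' + t)

/-- The frequency response of the kernel `w` on the `2H × 2W` grid:
`β(u',v') = ∑_{s=0}^{k-1} ∑_{t=0}^{k-1} w(s,t)·exp(2πi(u's/(2H) + v't/(2W)))`. -/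
noncomputable def beta (H W k : ℤ) (w : ℤ → ℤ → ℂ) (u' v' : ℤ) : ℂ :=
  ∑ s ∈ Finset.Icc (0 : ℤ) (k - 1), ∑ t ∈ Finset.Icc (0 : ℤ) (k - 1),
    w s t * Complex.exp ((2 * (Real.pi : ℂ) * Complex.I) *
      ((u' : ℂ) * (s : ℂ) / (2 * (H : ℂ)) + (v' : ℂ) * (t : ℂ) / (2 * (W : ℂ))))

/-!
Write `H = k M`, `W = k N` and `e(θ) = exp(2πiθ)`. For the shifted frequency `u' = u + 2aM`, the
product `β(u', v') F_X(u', v')` is a sum over `s, t, x, y` of `w(s,t) X(x,y)` times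
`e(u'(s - x)/(2H)) e(v'(t - y)/(2W))`. Since `e(u'(s - x)/(2H)) = e(u(s - x)/(2H)) e(a(s - x)/k)`,
summing over `a` produces a sum of `k`-th roots of unity, which is `k` when `k ∣ s - x` and `0`
otherwise. Only `x = k x' + s` survives, and there the remaining factor is `e(-u x'/(2M))`, the
kernel of the coarse DFT. Doing the same in the second coordinate gives `k² F_{D(X)}(u, v)`.
-/

open Finset Complex

theorem sum_comm₄ {ι κ R : Type*} [AddCommMonoid R] (A B : Finset ι) (C D : Finset κ)
    (f : ι → ι → κ → κ → R) :
    ∑ a ∈ A, ∑ b ∈ B, ∑ c ∈ C, ∑ d ∈ D, f a b c d =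
      ∑ c ∈ C, ∑ d ∈ D, ∑ a ∈ A, ∑ b ∈ B, f a b c d := by
  simp only [← sum_product' A B, ← sum_product' C D]
  exact sum_comm

theorem sum_Icc_ite_dvd_sub {R : Type*} [AddCommMonoid R] {k s : ℤ} (hk : 0 < k)
    (hs : s ∈ Icc 0 (k - 1)) (M : ℤ) (g : ℤ → R) :
    ∑ x ∈ Icc (-(k * M)) (k * M - 1), (if k ∣ s - x then g x else 0) =
      ∑ x' ∈ Icc (-M) (M - 1), g (k * x' + s) := by
  rw [← sum_filter, ← sum_image (f := g) (g := fun x' => k * x' + s)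
    (fun x _ y _ h => by simpa [hk.ne'] using h)]
  congr 1
  ext x
  simp only [mem_filter, mem_Icc, mem_image] at hs ⊢
  constructor
  · rintro ⟨⟨h1, h2⟩, c, hc⟩
    refine ⟨-c, ⟨?_, ?_⟩, by linarith⟩
    · by_contra! h; nlinarith
    · by_contra! h; nlinarith
  · rintro ⟨x', ⟨h1, h2⟩, rfl⟩
    exact ⟨⟨by nlinarith, by nlinarith⟩, ⟨-x', by ring⟩⟩

theorem IsPrimitiveRoot.sum_Icc_zpow_mul {R : Type*} [Field R] {ζ : R} {n : ℕ}
    (hζ : IsPrimitiveRoot ζ n) (d : ℤ) :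
    ∑ a ∈ Icc (0 : ℤ) (n - 1), ζ ^ (a * d) = if (n : ℤ) ∣ d then (n : R) else 0 := by
  rw [Int.Icc_eq_finset_map, sum_map]
  simp only [Function.Embedding.trans_apply, Nat.castEmbedding_apply, addLeftEmbedding_apply,
    zero_add, sub_zero, sub_add_cancel, Int.toNat_natCast, zpow_mul', zpow_natCast]
  split_ifs with hd
  · simp [(hζ.zpow_eq_one_iff_dvd d).2 hd]
  · have hne : ζ ^ d ≠ 1 := mt (hζ.zpow_eq_one_iff_dvd d).1 hd
    rw [geom_sum_eq hne, ← zpow_natCast, ← zpow_mul, mul_comm, zpow_mul, zpow_natCast,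
      hζ.pow_eq_one, one_zpow, sub_self, zero_div]

noncomputable def twiddle (L u d : ℤ) : ℂ :=
  exp (2 * Real.pi * I * (u * d / (2 * L)))

theorem twiddle_add (L u d e : ℤ) : twiddle L u (d + e) = twiddle L u d * twiddle L u e := by
  simp only [twiddle, ← exp_add]
  push_cast
  ring_nf

theorem twiddle_mul_mul {k : ℤ} (hk : k ≠ 0) (L u d : ℤ) :
    twiddle (k * L) u (k * d) = twiddle L u d := by
  simp only [twiddle]
  congr 1
  push_cast
  field_simp

theorem twiddle_add_two_mul {k M : ℤ} (hk : k ≠ 0) (hM : M ≠ 0) (u a d : ℤ) :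
    twiddle (k * M) (u + 2 * a * M) d =
      twiddle (k * M) u d * exp (2 * Real.pi * I / k) ^ (a * d) := by
  simp only [twiddle, ← exp_int_mul, ← exp_add]
  congr 1
  push_cast
  field_simp

theorem dft_eq_sum_twiddle (M N : ℤ) (Z : ℤ → ℤ → ℂ) (u v : ℤ) :
    dft M N Z u v = ∑ x ∈ Icc (-M) (M - 1), ∑ y ∈ Icc (-N) (N - 1),
      Z x y * (twiddle M u (-x) * twiddle N v (-y)) := by
  rw [dft]
  refine sum_congr rfl fun x _ => sum_congr rfl fun y _ => ?_
  rw [twiddle, twiddle, ← exp_add]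
  push_cast
  ring_nf

theorem beta_eq_sum_twiddle (H W k : ℤ) (w : ℤ → ℤ → ℂ) (u v : ℤ) :
    beta H W k w u v = ∑ s ∈ Icc (0 : ℤ) (k - 1), ∑ t ∈ Icc (0 : ℤ) (k - 1),
      w s t * (twiddle H u s * twiddle W v t) := by
  rw [beta]
  refine sum_congr rfl fun s _ => sum_congr rfl fun t _ => ?_
  rw [twiddle, twiddle, ← exp_add]
  ring_nf

theorem beta_mul_dft (H W k : ℤ) (w X : ℤ → ℤ → ℂ) (u v : ℤ) :
    beta H W k w u v * dft H W X u v =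
      ∑ s ∈ Icc (0 : ℤ) (k - 1), ∑ t ∈ Icc (0 : ℤ) (k - 1), w s t *
        ∑ x ∈ Icc (-H) (H - 1), ∑ y ∈ Icc (-W) (W - 1),
          X x y * (twiddle H u (s - x) * twiddle W v (t - y)) := by
  rw [beta_eq_sum_twiddle, dft_eq_sum_twiddle, sum_mul]
  refine sum_congr rfl fun s _ => ?_
  rw [sum_mul]
  refine sum_congr rfl fun t _ => ?_
  simp only [mul_sum]
  refine sum_congr rfl fun x _ => sum_congr rfl fun y _ => ?_
  rw [sub_eq_add_neg s, sub_eq_add_neg t, twiddle_add, twiddle_add]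
  ring

theorem sum_twiddle_add_two_mul {k M : ℤ} (hk : 0 < k) (hM : M ≠ 0) (u d : ℤ) :
    ∑ a ∈ Icc (0 : ℤ) (k - 1), twiddle (k * M) (u + 2 * a * M) d =
      if k ∣ d then k * twiddle (k * M) u d else 0 := by
  lift k to ℕ using hk.le
  have hk0 : k ≠ 0 := by exact_mod_cast hk.ne'
  simp_rw [twiddle_add_two_mul (Int.natCast_ne_zero.2 hk0) hM, ← mul_sum, Int.cast_natCast,
    (isPrimitiveRoot_exp k hk0).sum_Icc_zpow_mul]
  split_ifs <;> simp [mul_comm]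

theorem sum_mul_sum_twiddle_alias {k M s : ℤ} (hk : 0 < k) (hM : M ≠ 0) (hs : s ∈ Icc 0 (k - 1))
    (u : ℤ) (f : ℤ → ℂ) :
    ∑ x ∈ Icc (-(k * M)) (k * M - 1),
        f x * ∑ a ∈ Icc (0 : ℤ) (k - 1), twiddle (k * M) (u + 2 * a * M) (s - x) =
      k * ∑ x' ∈ Icc (-M) (M - 1), f (k * x' + s) * twiddle M u (-x') := by
  simp_rw [sum_twiddle_add_two_mul hk hM, mul_ite, mul_zero, sum_Icc_ite_dvd_sub hk hs, mul_sum]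
  refine sum_congr rfl fun x' _ => ?_
  rw [show s - (k * x' + s) = k * -x' by ring, twiddle_mul_mul hk.ne']
  ring

theorem sum_sum_mul_sum_twiddle_alias {k M N s t : ℤ} (hk : 0 < k) (hM : M ≠ 0) (hN : N ≠ 0)
    (hs : s ∈ Icc 0 (k - 1)) (ht : t ∈ Icc 0 (k - 1)) (u v : ℤ) (f : ℤ → ℤ → ℂ) :
    ∑ x ∈ Icc (-(k * M)) (k * M - 1), ∑ y ∈ Icc (-(k * N)) (k * N - 1), f x y *
        ((∑ a ∈ Icc (0 : ℤ) (k - 1), twiddle (k * M) (u + 2 * a * M) (s - x)) *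
          ∑ b ∈ Icc (0 : ℤ) (k - 1), twiddle (k * N) (v + 2 * b * N) (t - y)) =
      k ^ 2 * ∑ x' ∈ Icc (-M) (M - 1), ∑ y' ∈ Icc (-N) (N - 1),
        f (k * x' + s) (k * y' + t) * (twiddle M u (-x') * twiddle N v (-y')) := by
  calc _ = ∑ x ∈ Icc (-(k * M)) (k * M - 1),
        (∑ y ∈ Icc (-(k * N)) (k * N - 1),
          f x y * ∑ b ∈ Icc (0 : ℤ) (k - 1), twiddle (k * N) (v + 2 * b * N) (t - y)) *
        ∑ a ∈ Icc (0 : ℤ) (k - 1), twiddle (k * M) (u + 2 * a * M) (s - x) := by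
        refine sum_congr rfl fun x _ => ?_
        rw [sum_mul]
        refine sum_congr rfl fun y _ => ?_
        ring
    _ = ∑ x ∈ Icc (-(k * M)) (k * M - 1),
        (k * ∑ y' ∈ Icc (-N) (N - 1), f x (k * y' + t) * twiddle N v (-y')) *
        ∑ a ∈ Icc (0 : ℤ) (k - 1), twiddle (k * M) (u + 2 * a * M) (s - x) := by
        simp_rw [sum_mul_sum_twiddle_alias hk hN ht]
    _ = _ := by
        rw [sum_mul_sum_twiddle_alias hk hM hs]
        simp only [mul_sum, sum_mul]
        refine sum_congr rfl fun x' _ => sum_congr rfl fun y' _ => ?_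
        ring

theorem sum_sum_beta_mul_dft (H W k : ℤ) (w X : ℤ → ℤ → ℂ) (A B : Finset ℤ) (U V : ℤ → ℤ) :
    ∑ a ∈ A, ∑ b ∈ B, beta H W k w (U a) (V b) * dft H W X (U a) (V b) =
      ∑ s ∈ Icc (0 : ℤ) (k - 1), ∑ t ∈ Icc (0 : ℤ) (k - 1), w s t *
        ∑ x ∈ Icc (-H) (H - 1), ∑ y ∈ Icc (-W) (W - 1), X x y *
          ((∑ a ∈ A, twiddle H (U a) (s - x)) * ∑ b ∈ B, twiddle W (V b) (t - y)) := by
  simp_rw [beta_mul_dft]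
  rw [sum_comm₄]
  refine sum_congr rfl fun s _ => sum_congr rfl fun t _ => ?_
  simp_rw [← mul_sum]
  rw [sum_comm₄]
  refine congrArg _ (sum_congr rfl fun x _ => sum_congr rfl fun y _ => ?_)
  rw [sum_mul_sum, mul_sum]
  simp_rw [mul_sum]

theorem dft_downsample (M N k : ℤ) (w X : ℤ → ℤ → ℂ) (u v : ℤ) :
    dft M N (downsample k w X) u v =
      ∑ s ∈ Icc (0 : ℤ) (k - 1), ∑ t ∈ Icc (0 : ℤ) (k - 1), w s t *
        ∑ x' ∈ Icc (-M) (M - 1), ∑ y' ∈ Icc (-N) (N - 1),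
          X (k * x' + s) (k * y' + t) * (twiddle M u (-x') * twiddle N v (-y')) := by
  simp only [dft_eq_sum_twiddle, downsample, mul_sum, sum_mul]
  rw [sum_comm₄ (Icc (-M) (M - 1))]
  refine sum_congr rfl fun s _ => sum_congr rfl fun t _ => ?_
  refine sum_congr rfl fun x' _ => sum_congr rfl fun y' _ => ?_
  ring

/-- The aliasing formula: the DFT of the `k`-fold down-sampled image on the
`2(H/k) × 2(W/k)` grid satisfies, for all integers `u, v`,
`F_{D(X)}(u,v) = (1/k²) ∑_{a=0}^{k-1} ∑_{b=0}^{k-1}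
  β(u + 2aH/k, v + 2bW/k)·F_X(u + 2aH/k, v + 2bW/k)`. -/
theorem stmt_1 (H W k : ℤ) (hH : 0 < H) (hW : 0 < W) (hk : 0 < k)
    (hkH : k ∣ H) (hkW : k ∣ W) (w : ℤ → ℤ → ℂ) (X : ℤ → ℤ → ℂ) :
    ∀ u v : ℤ,
      dft (H / k) (W / k) (downsample k w X) u v =
        (1 / (k : ℂ) ^ 2) *
          ∑ a ∈ Finset.Icc (0 : ℤ) (k - 1), ∑ b ∈ Finset.Icc (0 : ℤ) (k - 1),
            beta H W k w (u + 2 * a * (H / k)) (v + 2 * b * (W / k)) *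
              dft H W X (u + 2 * a * (H / k)) (v + 2 * b * (W / k)) := by
  obtain ⟨M, rfl⟩ := hkH
  obtain ⟨N, rfl⟩ := hkW
  intro u v
  have hM : M ≠ 0 := by rintro rfl; simp at hH
  have hN : N ≠ 0 := by rintro rfl; simp at hW
  rw [Int.mul_ediv_cancel_left M hk.ne', Int.mul_ediv_cancel_left N hk.ne', one_div_mul_eq_div,
    eq_div_iff (by exact_mod_cast (pow_pos hk 2).ne'), sum_sum_beta_mul_dft, dft_downsample,
    sum_mul]
  refine sum_congr rfl fun s hs => ?_
  rw [sum_mul]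
  refine sum_congr rfl fun t ht => ?_
  rw [sum_sum_mul_sum_twiddle_alias hk hM hN hs ht]
  ring
end

section
/- Let H, W, k be integers with k ≥ 2, k ∣ H, and k ∣ W. Then there exists an image X : ℤ → ℤ → ℂ such that: (i) its 2D discrete Fourier transform on the 2H×2W grid satisfies F_X(u,v) = 0 for every integer u with -H/k ≤ u ≤ H/k - 1 and every integer v with -W/k ≤ v ≤ W/k - 1 (i.e., X has no content in the low-frequency region); and yet (ii) the nearest-neighbor k-fold down-sampled image D(X)(x',y') := (1/k²)·Σ_{s=0}^{k-1} Σ_{t=0}^{k-1} X(kx'+s, ky'+t) is not identically zero on the grid of points (x',y') with -H/k ≤ x' ≤ H/k - 1 and -W/k ≤ y' ≤ W/k - 1. In other words, nearest-neighbor down-sampling has a nonzero dependency on the higher-frequency spectrum of the original image. -/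
/-- The nearest-neighbor `k`-fold down-sampled image:
`D(X)(x',y') = (1/k²) ∑_{s=0}^{k-1} ∑_{t=0}^{k-1} X(kx'+s, ky'+t)`. -/
noncomputable def nnDownsample (k : ℤ) (X : ℤ → ℤ → ℂ) (x' y' : ℤ) : ℂ :=
  (1 / (k : ℂ) ^ 2) *
    ∑ s ∈ Finset.Icc (0 : ℤ) (k - 1), ∑ t ∈ Finset.Icc (0 : ℤ) (k - 1),
      X (k * x' + s) (k * y' + t)

open Complex Finset Real

theorem mul_sum_Ico_zpow {K : Type*} [Field K] {r : K} (hr : r ≠ 0) {a b : ℤ} (hab : a ≤ b) :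
    (r - 1) * ∑ x ∈ Ico a b, r ^ x = r ^ b - r ^ a := by
  induction b, hab using Int.leInduction with
  | base => simp
  | succ b hab ih =>
    rw [← insert_Ico_right_eq_Ico_add_one hab, sum_insert (by simp), mul_add, ih,
      zpow_add_one₀ hr]
    ring

theorem sum_Ico_zpow_eq_zero_iff {K : Type*} [Field K] {r : K} (hr₀ : r ≠ 0) (hr₁ : r ≠ 1)
    {a b : ℤ} (hab : a ≤ b) :
    ∑ x ∈ Ico a b, r ^ x = 0 ↔ r ^ (b - a) = 1 := by
  have h := mul_sum_Ico_zpow hr₀ hab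
  rw [← sub_add_cancel b a, zpow_add₀ hr₀, ← sub_one_mul, sub_add_cancel] at h
  rw [← mul_right_inj' (sub_ne_zero.mpr hr₁), h, mul_zero, mul_eq_zero, sub_eq_zero,
    or_iff_left (zpow_ne_zero a hr₀)]

theorem isPrimitiveRoot_exp_pi_I_div {n : ℕ} (hn : n ≠ 0) :
    IsPrimitiveRoot (exp (π * I / n)) (2 * n) := by
  convert Complex.isPrimitiveRoot_exp (2 * n) (by omega) using 2
  push_cast
  field_simp

noncomputable def dft1 (M : ℤ) (f : ℤ → ℂ) (u : ℤ) : ℂ :=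
  ∑ x ∈ Icc (-M) (M - 1), f x * exp (-(2 * π * I) * (u * x / (2 * M)))

theorem dft_mul_eq_dft1_mul_dft1 (M N : ℤ) (f g : ℤ → ℂ) (u v : ℤ) :
    dft M N (fun x y => f x * g y) u v = dft1 M f u * dft1 N g v := by
  rw [dft1, dft1, sum_mul_sum]
  refine sum_congr rfl fun x _ => sum_congr rfl fun y _ => ?_
  rw [mul_add, Complex.exp_add]
  ring

theorem exp_neg_two_pi_I_mul_div_eq_zpow {n : ℕ} (hn : n ≠ 0) (u x : ℤ) :
    exp (-(2 * π * I) * (u * x / (2 * (n : ℤ)))) = exp (π * I / n) ^ (-(u * x)) := by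
  rw [← exp_int_mul]
  congr 1
  push_cast
  field_simp

theorem dft1_zpow_eq_zero {n : ℕ} (hn : n ≠ 0) {a u : ℤ} (h : ¬ (2 * n : ℤ) ∣ a - u) :
    dft1 n (fun x => exp (π * I / n) ^ (a * x)) u = 0 := by
  set ζ := exp (π * I / n)
  have hζ := isPrimitiveRoot_exp_pi_I_div hn
  have hζ₀ : ζ ≠ 0 := exp_ne_zero _
  have hterm : ∀ x : ℤ, ζ ^ (a * x) * exp (-(2 * π * I) * (u * x / (2 * (n : ℤ))))
      = (ζ ^ (a - u)) ^ x := fun x => by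
    rw [exp_neg_two_pi_I_mul_div_eq_zpow hn, ← zpow_add₀ hζ₀, ← zpow_mul]
    ring_nf
  simp only [dft1, hterm, Icc_sub_one_right_eq_Ico_of_not_isMin (not_isMin _)]
  refine (sum_Ico_zpow_eq_zero_iff (zpow_ne_zero _ hζ₀) ?_ (by omega)).mpr ?_
  · rwa [Ne, hζ.zpow_eq_one_iff_dvd]
  · rw [← zpow_mul, hζ.zpow_eq_one_iff_dvd]
    exact Dvd.intro_left (a - u) (by push_cast; ring)

theorem nnDownsample_const_snd (k : ℕ) (f : ℤ → ℂ) (x' y' : ℤ) :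
    nnDownsample k (fun x _ => f x) x' y' =
      1 / k * ∑ s ∈ Icc 0 ((k : ℤ) - 1), f (k * x' + s) := by
  rcases eq_or_ne k 0 with rfl | hk
  · simp [nnDownsample]
  simp only [nnDownsample, sum_const, Int.card_Icc, sub_add_cancel, sub_zero, Int.toNat_natCast,
    nsmul_eq_mul]
  push_cast
  rw [← mul_sum]
  field_simp

/-- Nearest-neighbor down-sampling has a nonzero dependency on the higher-frequency spectrum:
there exists an image whose DFT on the `2H × 2W` grid vanishes on the whole low-frequency
region `[-H/k, H/k-1] × [-W/k, W/k-1]`, and yet whose nearest-neighbor `k`-fold down-sampled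
image is not identically zero on the grid `[-H/k, H/k-1] × [-W/k, W/k-1]`. -/
theorem stmt_3 (H W k : ℤ) (hH : 0 < H) (hW : 0 < W) (hk : 2 ≤ k)
    (hkH : k ∣ H) (hkW : k ∣ W) :
    ∃ X : ℤ → ℤ → ℂ,
      (∀ u v : ℤ, -(H / k) ≤ u → u ≤ H / k - 1 → -(W / k) ≤ v → v ≤ W / k - 1 →
        dft H W X u v = 0) ∧
      ∃ x' y' : ℤ, -(H / k) ≤ x' ∧ x' ≤ H / k - 1 ∧ -(W / k) ≤ y' ∧ y' ≤ W / k - 1 ∧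
        nnDownsample k X x' y' ≠ 0 := by
  obtain ⟨m, rfl⟩ := hkH
  lift k to ℕ using by omega
  lift m to ℕ using nonneg_of_mul_nonneg_right hH.le (by omega)
  have hHk : (k * m : ℤ) / k = m := Int.mul_ediv_cancel_left _ (by omega)
  have hk₀ : 0 < k := by omega
  have hm : 0 < m := by nlinarith
  have hWk : 1 ≤ W / k :=
    (Int.le_ediv_iff_mul_le (by omega)).mpr (by simpa using Int.le_of_dvd hW hkW)
  set ζ := exp (π * I / (k * m : ℕ))
  have hζ : IsPrimitiveRoot ζ (2 * (k * m)) :=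
    isPrimitiveRoot_exp_pi_I_div (Nat.mul_pos hk₀ hm).ne'
  refine ⟨fun x _ => ζ ^ ((m : ℤ) * x), ?_, 0, 0, by omega, by omega, by omega, by omega, ?_⟩
  · intro u v hu₁ hu₂ _ _
    rw [hHk] at hu₁ hu₂
    -- `0 < m - u ≤ 2m < 2km`
    have hfreq : ¬ (2 * (k * m : ℕ) : ℤ) ∣ m - u := fun hd => by
      have := Int.eq_zero_of_dvd_of_nonneg_of_lt (by omega) (by push_cast; nlinarith) hd
      omega
    have hsep := dft_mul_eq_dft1_mul_dft1 (k * m : ℕ) W (fun x => ζ ^ ((m : ℤ) * x)) 1 u v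
    simp only [Pi.one_apply, mul_one, Nat.cast_mul] at hsep
    rw [hsep, ← Nat.cast_mul, dft1_zpow_eq_zero (Nat.mul_pos hk₀ hm).ne' hfreq, zero_mul]
  · have hω : IsPrimitiveRoot (ζ ^ m) (2 * k) := hζ.pow (by positivity) (by ring)
    have hωk : (ζ ^ m) ^ ((k : ℤ) - 0) ≠ 1 := by
      rw [sub_zero, zpow_natCast, Ne, hω.pow_eq_one_iff_dvd]
      exact fun hd => by have := Nat.le_of_dvd (by omega) hd; omega
    rw [nnDownsample_const_snd, Icc_sub_one_right_eq_Ico_of_not_isMin (not_isMin _)]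
    simp only [mul_zero, zero_add, zpow_mul, zpow_natCast]
    refine mul_ne_zero (one_div_ne_zero (Nat.cast_ne_zero.mpr hk₀.ne')) ?_
    rwa [Ne, sum_Ico_zpow_eq_zero_iff (pow_ne_zero _ (Complex.exp_ne_zero _))
      (hω.ne_one (by omega)) (by omega)]
end

section
/- Let H, W, m be positive integers and X : ℤ → ℤ → ℂ an image. Define the m-fold nearest-neighbor up-sampled image X_up : ℤ → ℤ → ℂ by X_up(x,y) := X(⌊x/m⌋, ⌊y/m⌋) (floor division; equivalently X_up(mx₀+s, my₀+t) = X(x₀,y₀) for all integers x₀, y₀ and all s, t ∈ {0,…,m-1}). Then for all integers u, v, the 2D discrete Fourier transform of X_up on the 2mH×2mW grid satisfies F_{X_up}(u,v) = β_up(u,v)·F_X(u,v), where β_up(u,v) := Σ_{s=0}^{m-1} Σ_{t=0}^{m-1} exp(-2πi(us/(2mH) + vt/(2mW))) and F_X is the 2D discrete Fourier transform of X on the 2H×2W grid (evaluated at all integer frequencies via its defining, periodic, formula). -/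
/-- The `m`-fold nearest-neighbor up-sampled image: `X_up(x,y) = X(⌊x/m⌋, ⌊y/m⌋)`
(floor division). -/
noncomputable def upsample (m : ℤ) (X : ℤ → ℤ → ℂ) (x y : ℤ) : ℂ :=
  X (Int.fdiv x m) (Int.fdiv y m)

/-- The frequency response of `m`-fold nearest-neighbor up-sampling on the `2mH × 2mW` grid:
`β_up(u,v) = ∑_{s=0}^{m-1} ∑_{t=0}^{m-1} exp(-2πi(us/(2mH) + vt/(2mW)))`. -/
noncomputable def betaUp (H W m : ℤ) (u v : ℤ) : ℂ :=
  ∑ s ∈ Finset.Icc (0 : ℤ) (m - 1), ∑ t ∈ Finset.Icc (0 : ℤ) (m - 1),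
    Complex.exp (-(2 * (Real.pi : ℂ) * Complex.I) *
      ((u : ℂ) * (s : ℂ) / (2 * ((m * H : ℤ) : ℂ)) +
       (v : ℂ) * (t : ℂ) / (2 * ((m * W : ℤ) : ℂ))))

/-- Floor division recovers the block index. -/
lemma fdiv_block (m a s : ℤ) (hm : 0 < m) (hs : 0 ≤ s) (hsm : s < m) :
    Int.fdiv (m * a + s) m = a := by
  rw [Int.fdiv_eq_ediv_of_nonneg _ hm.le, add_comm, Int.add_mul_ediv_left _ _ hm.ne',
    Int.ediv_eq_zero_of_lt hs hsm, zero_add]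

/-- Reindex a sum over `[-mM, mM-1]` as a double sum over blocks and offsets. -/
lemma reindex (m M : ℤ) (hm : 0 < m) (hM : 0 < M) (f : ℤ → ℂ) :
    ∑ x ∈ Finset.Icc (-(m * M)) (m * M - 1), f x =
      ∑ a ∈ Finset.Icc (-M) (M - 1), ∑ s ∈ Finset.Icc (0 : ℤ) (m - 1), f (m * a + s) := by
  rw [← Finset.sum_product']
  refine Finset.sum_nbij' (i := fun x => (Int.fdiv x m, x - m * Int.fdiv x m))
    (j := fun p => m * p.1 + p.2) ?_ ?_ ?_ ?_ ?_
  · intro x hx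
    simp only [Finset.mem_Icc] at hx
    have h1 : Int.fdiv x m = x / m := Int.fdiv_eq_ediv_of_nonneg _ hm.le
    have h2 := Int.emod_emod_of_dvd x (dvd_refl m)
    have h3 := Int.mul_ediv_add_emod x m
    have h4 := Int.emod_nonneg x hm.ne'
    have h5 := Int.emod_lt_of_pos x hm
    simp only [Finset.mem_product, Finset.mem_Icc, h1]
    constructor
    · constructor
      · rw [Int.le_ediv_iff_mul_le hm]; nlinarith
      · have : x / m < M := by rw [Int.ediv_lt_iff_lt_mul hm]; nlinarith
        omega
    · omega
  · intro p hp
    simp only [Finset.mem_product, Finset.mem_Icc] at hp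
    simp only [Finset.mem_Icc]
    constructor <;> nlinarith [hp.1.1, hp.1.2, hp.2.1, hp.2.2]
  · intro x hx
    have h3 := Int.mul_ediv_add_emod x m
    have h1 : Int.fdiv x m = x / m := Int.fdiv_eq_ediv_of_nonneg _ hm.le
    dsimp only
    omega
  · intro p hp
    simp only [Finset.mem_product, Finset.mem_Icc] at hp
    have h1 := fdiv_block m p.1 p.2 hm hp.2.1 (by omega)
    rw [h1]
    simp
  · intro x hx
    dsimp only
    congr 1
    ring

/-- Rearranging a quadruple sum. -/
lemma swap4 (A B S T : Finset ℤ) (F : ℤ → ℤ → ℤ → ℤ → ℂ) :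
    ∑ x ∈ A, ∑ s ∈ S, ∑ y ∈ B, ∑ t ∈ T, F x s y t =
      ∑ s ∈ S, ∑ t ∈ T, ∑ x ∈ A, ∑ y ∈ B, F x s y t := by
  rw [Finset.sum_comm]
  refine Finset.sum_congr rfl fun s _ => ?_
  rw [show (∑ x ∈ A, ∑ y ∈ B, ∑ t ∈ T, F x s y t)
      = ∑ x ∈ A, ∑ t ∈ T, ∑ y ∈ B, F x s y t from
    Finset.sum_congr rfl fun x _ => Finset.sum_comm, Finset.sum_comm]

/-- The DFT of the `m`-fold nearest-neighbor up-sampled image on the `2mH × 2mW` grid is, at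
every integer frequency `(u,v)`, the corresponding DFT value of the original image on the
`2H × 2W` grid scaled by the frequency response `β_up(u,v)`. -/
theorem stmt_4 (H W m : ℤ) (hH : 0 < H) (hW : 0 < W) (hm : 0 < m) (X : ℤ → ℤ → ℂ) :
    ∀ u v : ℤ,
      dft (m * H) (m * W) (upsample m X) u v = betaUp H W m u v * dft H W X u v := by
  intro u v
  have hm' : (m : ℂ) ≠ 0 := by exact_mod_cast hm.ne'
  have hH' : (H : ℂ) ≠ 0 := by exact_mod_cast hH.ne'
  have hW' : (W : ℂ) ≠ 0 := by exact_mod_cast hW.ne'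
  rw [dft, reindex m H hm hH,
    Finset.sum_congr rfl fun a _ => Finset.sum_congr rfl fun s _ => reindex m W hm hW _,
    swap4]
  rw [betaUp, dft, Finset.sum_mul]
  refine Finset.sum_congr rfl fun s hs => ?_
  rw [Finset.sum_mul]
  refine Finset.sum_congr rfl fun t ht => ?_
  rw [Finset.mul_sum]
  refine Finset.sum_congr rfl fun a ha => ?_
  rw [Finset.mul_sum]
  refine Finset.sum_congr rfl fun b hb => ?_
  simp only [Finset.mem_Icc] at hs ht
  rw [upsample, fdiv_block m a s hm hs.1 (by omega), fdiv_block m b t hm ht.1 (by omega)]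
  rw [mul_comm (Complex.exp _) _, mul_assoc (X a b), ← Complex.exp_add]
  congr 2
  push_cast
  have e1 : (u : ℂ) * (m * a + s) / (2 * (m * H)) = u * a / (2 * H) + u * s / (2 * (m * H)) := by
    field_simp
  have e2 : (v : ℂ) * (m * b + t) / (2 * (m * W)) = v * b / (2 * W) + v * t / (2 * (m * W)) := by
    field_simp
  rw [e1, e2]
  ring
end

section
/- Let p and q be positive integers with p ≤ q, set γ = p/q, and let x be a nonzero real number. Then, as n → ∞ over the positive integers, (1/(2qn)) · Σ_{s=-pn}^{pn} exp(-2πi·x·s/(2qn)) converges to sin(πγx)/(πx); that is, the normalized symmetric exponential sum (a Riemann sum of exp(-2πi·x·τ) over τ ∈ [-γ/2, γ/2]) converges to the (real) value sin(πγx)/(πx) of a scaled sinc function. -/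
open Complex Filter Finset

/-- Closed form (Dirichlet kernel) for the symmetric exponential sum. -/
lemma expsum_eq (θ : ℝ) (m : ℕ) (h : Real.sin (θ / 2) ≠ 0) :
    ∑ s ∈ Finset.Icc (-(m : ℤ)) (m : ℤ), Complex.exp ((θ : ℂ) * Complex.I * (s : ℂ))
      = ((Real.sin (((m : ℝ) + 1 / 2) * θ) / Real.sin (θ / 2) : ℝ) : ℂ) := by
  set u : ℂ := Complex.exp ((θ : ℂ) * Complex.I / 2) with hu
  have hu0 : u ≠ 0 := Complex.exp_ne_zero _
  have hz : Complex.exp ((θ : ℂ) * Complex.I) = u * u := by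
    rw [hu, ← Complex.exp_add]
    ring_nf
  have hz1 : u * u ≠ 1 := by
    rw [← hz]
    intro h1
    rw [Complex.exp_eq_one_iff] at h1
    obtain ⟨k, hk⟩ := h1
    have hθ : (θ : ℂ) = 2 * Real.pi * k := by
      have hk' : (θ : ℂ) * Complex.I = (2 * (Real.pi : ℂ) * k) * Complex.I := by
        rw [hk]; ring
      exact mul_right_cancel₀ Complex.I_ne_zero hk'
    have hθr : θ = 2 * Real.pi * k := by
      exact_mod_cast hθ
    apply h
    have : θ / 2 = (k : ℝ) * Real.pi := by rw [hθr]; ring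
    rw [this, Real.sin_int_mul_pi]
  -- reindex the sum
  have hre : ∑ s ∈ Finset.Icc (-(m : ℤ)) (m : ℤ), Complex.exp ((θ : ℂ) * Complex.I * (s : ℂ))
      = ∑ k ∈ Finset.range (2 * m + 1),
          Complex.exp ((θ : ℂ) * Complex.I * (((k : ℤ) - (m : ℤ) : ℤ) : ℂ)) := by
    refine Finset.sum_bij' (fun s _ => (s + (m : ℤ)).toNat) (fun k _ => (k : ℤ) - (m : ℤ))
      ?_ ?_ ?_ ?_ ?_
    · intro a ha
      simp only [Finset.mem_Icc] at ha
      simp only [Finset.mem_range]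
      omega
    · intro a ha
      simp only [Finset.mem_range] at ha
      simp only [Finset.mem_Icc]
      omega
    · intro a ha
      simp only [Finset.mem_Icc] at ha
      omega
    · intro a ha
      simp only [Finset.mem_range] at ha
      omega
    · intro a ha
      simp only [Finset.mem_Icc] at ha
      have h' : (((a + (m : ℤ)).toNat : ℤ) - (m : ℤ)) = a := by omega
      rw [h']
  rw [hre]
  have hterm : ∀ k ∈ Finset.range (2 * m + 1),
      Complex.exp ((θ : ℂ) * Complex.I * (((k : ℤ) - (m : ℤ) : ℤ) : ℂ))
        = (u * u) ^ k / (u * u) ^ m := by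
    intro k _
    have : (θ : ℂ) * Complex.I * (((k : ℤ) - (m : ℤ) : ℤ) : ℂ)
        = (k : ℂ) * ((θ : ℂ) * Complex.I) - (m : ℂ) * ((θ : ℂ) * Complex.I) := by
      push_cast
      ring
    rw [this, Complex.exp_sub, Complex.exp_nat_mul, Complex.exp_nat_mul, hz]
  rw [Finset.sum_congr rfl hterm, ← Finset.sum_div, geom_sum_eq hz1]
  -- express the sines via u
  have hsin1 : ((Real.sin (((m : ℝ) + 1 / 2) * θ) : ℝ) : ℂ)
      = ((u ^ (2 * m + 1))⁻¹ - u ^ (2 * m + 1)) * Complex.I / 2 := by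
    rw [Complex.ofReal_sin, Complex.sin]
    have h1 : -((((m : ℝ) + 1 / 2) * θ : ℝ) : ℂ) * Complex.I
        = -(((2 * m + 1 : ℕ) : ℂ) * ((θ : ℂ) * Complex.I / 2)) := by push_cast; ring
    have h2 : ((((m : ℝ) + 1 / 2) * θ : ℝ) : ℂ) * Complex.I
        = ((2 * m + 1 : ℕ) : ℂ) * ((θ : ℂ) * Complex.I / 2) := by push_cast; ring
    rw [h1, h2, Complex.exp_neg, Complex.exp_nat_mul, ← hu]
  have hsin2 : ((Real.sin (θ / 2) : ℝ) : ℂ) = (u⁻¹ - u) * Complex.I / 2 := by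
    rw [Complex.ofReal_sin, Complex.sin]
    have h1 : -(((θ / 2 : ℝ)) : ℂ) * Complex.I = -((θ : ℂ) * Complex.I / 2) := by
      push_cast; ring
    have h2 : (((θ / 2 : ℝ)) : ℂ) * Complex.I = (θ : ℂ) * Complex.I / 2 := by
      push_cast; ring
    rw [h1, h2, Complex.exp_neg, ← hu]
  have hs2 : ((Real.sin (θ / 2) : ℝ) : ℂ) ≠ 0 := Complex.ofReal_ne_zero.mpr h
  have huu : u⁻¹ - u ≠ 0 := by
    intro h0
    apply hs2
    rw [hsin2, h0]
    ring
  rw [Complex.ofReal_div, hsin1, hsin2, div_div]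
  have hzz1 : u * u - 1 ≠ 0 := sub_ne_zero.mpr hz1
  have hd1 : (u * u - 1) * (u * u) ^ m ≠ 0 :=
    mul_ne_zero hzz1 (pow_ne_zero _ (mul_ne_zero hu0 hu0))
  have hd2 : (u⁻¹ - u) * Complex.I / 2 ≠ 0 := by
    rw [← hsin2]; exact hs2
  rw [div_eq_div_iff hd1 hd2]
  field_simp
  ring

/-- One-dimensional infinite-grid limit of the low-pass filtering kernel: for positive integers
`p ≤ q` with `γ = p/q` and a nonzero real `x`, as `n → ∞`,
`(1/(2qn)) ∑_{s=-pn}^{pn} exp(-2πi·x·s/(2qn)) → sin(πγx)/(πx)`. -/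
theorem stmt_12 (p q : ℕ) (hp : 0 < p) (hq : 0 < q) (hpq : p ≤ q) (x : ℝ) (hx : x ≠ 0) :
    Filter.Tendsto
      (fun n : ℕ =>
        (1 / (2 * (q : ℂ) * (n : ℂ))) *
          ∑ s ∈ Finset.Icc (-((p * n : ℕ) : ℤ)) ((p * n : ℕ) : ℤ),
            Complex.exp (-(2 * (Real.pi : ℂ) * Complex.I) * (x : ℂ) * (s : ℂ) /
              (2 * (q : ℂ) * (n : ℂ))))
      Filter.atTop
      (nhds ((Real.sin (Real.pi * ((p : ℝ) / (q : ℝ)) * x) / (Real.pi * x) : ℝ) : ℂ)) := by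
  have hπ : Real.pi ≠ 0 := Real.pi_ne_zero
  have hπx : Real.pi * x ≠ 0 := mul_ne_zero hπ hx
  set θ : ℕ → ℝ := fun n => -(Real.pi * x) / ((q : ℝ) * n) with hθdef
  -- the real sequence
  set g : ℕ → ℝ := fun n =>
    Real.sin ((((p * n : ℕ) : ℝ) + 1 / 2) * θ n) / (2 * (q : ℝ) * n * Real.sin (θ n / 2))
    with hgdef
  have hqR : ((q : ℝ)) ≠ 0 := Nat.cast_ne_zero.mpr hq.ne'
  -- basic facts for large n
  have hkey : ∀ n : ℕ, 1 ≤ n → |x| < 2 * (q : ℝ) * n → Real.sin (θ n / 2) ≠ 0 := by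
    intro n hn1 hnx
    have hnR : (0 : ℝ) < n := by exact_mod_cast hn1
    have hc : (0 : ℝ) < 2 * (q : ℝ) * n := by positivity
    have ht : θ n / 2 = -(Real.pi * x) / (2 * (q : ℝ) * n) := by
      simp only [hθdef]; ring
    have htne : θ n / 2 ≠ 0 := by
      rw [ht]
      exact div_ne_zero (neg_ne_zero.mpr hπx) hc.ne'
    have habs : |θ n / 2| < Real.pi := by
      rw [ht, abs_div, abs_neg, abs_mul, abs_of_pos Real.pi_pos, abs_of_pos hc,
        div_lt_iff₀ hc]
      calc Real.pi * |x| < Real.pi * (2 * (q : ℝ) * n) := by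
            exact mul_lt_mul_of_pos_left hnx Real.pi_pos
        _ = Real.pi * (2 * (q : ℝ) * n) := rfl
    rw [abs_lt] at habs
    rw [Ne, Real.sin_eq_zero_iff_of_lt_of_lt habs.1 habs.2]
    exact htne
  -- eventual equality of the complex sequence with ↑(g n)
  have hev : ∀ᶠ n : ℕ in atTop,
      (1 / (2 * (q : ℂ) * (n : ℂ))) *
          ∑ s ∈ Finset.Icc (-((p * n : ℕ) : ℤ)) ((p * n : ℕ) : ℤ),
            Complex.exp (-(2 * (Real.pi : ℂ) * Complex.I) * (x : ℂ) * (s : ℂ) /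
              (2 * (q : ℂ) * (n : ℂ)))
        = ((g n : ℝ) : ℂ) := by
    filter_upwards [eventually_ge_atTop (max 1 ⌈|x|⌉₊)] with n hn
    have hn1 : 1 ≤ n := le_trans (le_max_left _ _) hn
    have hnx : |x| < 2 * (q : ℝ) * n := by
      have h1 : |x| ≤ (⌈|x|⌉₊ : ℝ) := Nat.le_ceil _
      have h2 : ((⌈|x|⌉₊ : ℕ) : ℝ) ≤ (n : ℝ) := by
        exact_mod_cast le_trans (le_max_right _ _) hn
      have hnR : (1 : ℝ) ≤ n := by exact_mod_cast hn1
      have hqR1 : (1 : ℝ) ≤ (q : ℝ) := by exact_mod_cast hq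
      nlinarith
    have hsin := hkey n hn1 hnx
    have hnR : ((n : ℝ)) ≠ 0 := by positivity
    have hnC : ((n : ℂ)) ≠ 0 := Nat.cast_ne_zero.mpr (by omega)
    have hqC : ((q : ℂ)) ≠ 0 := Nat.cast_ne_zero.mpr hq.ne'
    have hexp : ∀ s : ℤ,
        -(2 * (Real.pi : ℂ) * Complex.I) * (x : ℂ) * (s : ℂ) / (2 * (q : ℂ) * (n : ℂ))
          = ((θ n : ℝ) : ℂ) * Complex.I * (s : ℂ) := by
      intro s
      simp only [hθdef]
      push_cast
      field_simp
    calc (1 / (2 * (q : ℂ) * (n : ℂ))) *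
          ∑ s ∈ Finset.Icc (-((p * n : ℕ) : ℤ)) ((p * n : ℕ) : ℤ),
            Complex.exp (-(2 * (Real.pi : ℂ) * Complex.I) * (x : ℂ) * (s : ℂ) /
              (2 * (q : ℂ) * (n : ℂ)))
        = (1 / (2 * (q : ℂ) * (n : ℂ))) *
          ∑ s ∈ Finset.Icc (-((p * n : ℕ) : ℤ)) ((p * n : ℕ) : ℤ),
            Complex.exp (((θ n : ℝ) : ℂ) * Complex.I * (s : ℂ)) := by
          congr 1
          exact Finset.sum_congr rfl fun s _ => by rw [hexp s]
      _ = (1 / (2 * (q : ℂ) * (n : ℂ))) *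
          ((Real.sin ((((p * n : ℕ) : ℝ) + 1 / 2) * θ n) / Real.sin (θ n / 2) : ℝ) : ℂ) := by
          rw [expsum_eq (θ n) (p * n) hsin]
      _ = ((g n : ℝ) : ℂ) := by
          simp only [hgdef]
          push_cast
          field_simp
  -- limit of the real sequence
  have h0 : Tendsto (fun n : ℕ => 1 / (n : ℝ)) atTop (nhds 0) :=
    tendsto_one_div_atTop_nhds_zero_nat
  -- limit of the numerator
  have ha : Tendsto (fun n : ℕ => (((p * n : ℕ) : ℝ) + 1 / 2) * θ n) atTop
      (nhds (-(Real.pi * ((p : ℝ) / q) * x))) := by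
    have hA : Tendsto
        (fun n : ℕ => -(Real.pi * x) * ((p : ℝ) / q + 1 / (2 * (q : ℝ)) * (1 / n))) atTop
        (nhds (-(Real.pi * x) * ((p : ℝ) / q + 1 / (2 * (q : ℝ)) * 0))) :=
      (((h0.const_mul (1 / (2 * (q : ℝ)))).const_add ((p : ℝ) / q)).const_mul _)
    have : -(Real.pi * x) * ((p : ℝ) / q + 1 / (2 * (q : ℝ)) * 0)
        = -(Real.pi * ((p : ℝ) / q) * x) := by ring
    rw [this] at hA
    refine hA.congr' ?_
    filter_upwards [eventually_ge_atTop 1] with n hn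
    have hnR : ((n : ℝ)) ≠ 0 := by positivity
    simp only [hθdef]
    push_cast
    field_simp
  have h1 : Tendsto (fun n : ℕ => Real.sin ((((p * n : ℕ) : ℝ) + 1 / 2) * θ n)) atTop
      (nhds (Real.sin (-(Real.pi * ((p : ℝ) / q) * x)))) :=
    (Real.continuous_sin.tendsto _).comp ha
  -- limit of the denominator
  have hslope : Tendsto (fun t : ℝ => Real.sin t / t) (nhdsWithin 0 {0}ᶜ) (nhds 1) := by
    have hd := Real.hasDerivAt_sin 0
    rw [hasDerivAt_iff_tendsto_slope] at hd
    rw [Real.cos_zero] at hd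
    refine hd.congr fun t => ?_
    simp [slope_def_field, neg_div_neg_eq]
  have hb0 : Tendsto (fun n : ℕ => θ n / 2) atTop (nhds 0) := by
    have : Tendsto (fun n : ℕ => -(Real.pi * x) / (2 * (q : ℝ)) * (1 / n)) atTop
        (nhds (-(Real.pi * x) / (2 * (q : ℝ)) * 0)) := h0.const_mul _
    rw [mul_zero] at this
    refine this.congr fun n => ?_
    simp only [hθdef]
    ring
  have hbne : ∀ᶠ n : ℕ in atTop, θ n / 2 ∈ ({0}ᶜ : Set ℝ) := by
    filter_upwards [eventually_ge_atTop 1] with n hn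
    have hnR : ((n : ℝ)) ≠ 0 := by positivity
    simp only [Set.mem_compl_iff, Set.mem_singleton_iff, hθdef]
    exact div_ne_zero (div_ne_zero (neg_ne_zero.mpr hπx) (mul_ne_zero hqR hnR)) two_ne_zero
  have hb : Tendsto (fun n : ℕ => θ n / 2) atTop (nhdsWithin 0 {0}ᶜ) :=
    tendsto_nhdsWithin_iff.mpr ⟨hb0, hbne⟩
  have hq1 : Tendsto (fun n : ℕ => Real.sin (θ n / 2) / (θ n / 2)) atTop (nhds 1) :=
    hslope.comp hb
  have h2 : Tendsto (fun n : ℕ => 2 * (q : ℝ) * n * Real.sin (θ n / 2)) atTop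
      (nhds (-(Real.pi * x))) := by
    have h2' := hq1.mul_const (-(Real.pi * x))
    rw [one_mul] at h2'
    refine h2'.congr' ?_
    filter_upwards [eventually_ge_atTop 1] with n hn
    have hnR : ((n : ℝ)) ≠ 0 := by positivity
    have htne : θ n / 2 ≠ 0 := by
      simp only [hθdef]
      exact div_ne_zero (div_ne_zero (neg_ne_zero.mpr hπx) (mul_ne_zero hqR hnR)) two_ne_zero
    have hmul : 2 * (q : ℝ) * n * (θ n / 2) = -(Real.pi * x) := by
      simp only [hθdef]
      field_simp
    rw [← hmul]
    generalize θ n / 2 = t at htne ⊢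
    field_simp
  have hlim : Tendsto g atTop
      (nhds (Real.sin (Real.pi * ((p : ℝ) / q) * x) / (Real.pi * x))) := by
    have := h1.div h2 (neg_ne_zero.mpr hπx)
    have hval : Real.sin (-(Real.pi * ((p : ℝ) / q) * x)) / -(Real.pi * x)
        = Real.sin (Real.pi * ((p : ℝ) / q) * x) / (Real.pi * x) := by
      rw [Real.sin_neg, neg_div_neg_eq]
    rw [hval] at this
    exact this
  have hC : Tendsto (fun n : ℕ => ((g n : ℝ) : ℂ)) atTop
      (nhds ((Real.sin (Real.pi * ((p : ℝ) / q) * x) / (Real.pi * x) : ℝ) : ℂ)) :=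
    (Complex.continuous_ofReal.tendsto _).comp hlim
  exact Filter.Tendsto.congr' (Filter.EventuallyEq.symm hev) hC
end

section
/- Let p and q be positive integers with p ≤ q, set γ = p/q, and let x and y be nonzero real numbers. Then, as n → ∞ over the positive integers, (1/(2qn))² · Σ_{s=-pn}^{pn} Σ_{t=-pn}^{pn} exp(-2πi(x·s + y·t)/(2qn)) converges to sin(πγx)·sin(πγy)/(π²·x·y). That is, as the image size tends to infinity with the relative bandwidth γ of the square low-pass filter held fixed, the normalized low-pass convolution kernel converges pointwise to a two-dimensional sinc function (a product of one-dimensional scaled sinc functions). -/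
/-!
Each one-dimensional factor is a Dirichlet kernel: with `v = πx/(2qn)`,
`(∑_{|s| ≤ pn} e^{-2isv}) · sin v = sin((2pn+1)v) = sin(πγx + v)`, while the normalization
`2qn · sin v = πx · sinc v` tends to `πx`. The double sum is the product of the two factors.
-/

open Filter Finset Complex Topology

theorem Filter.Tendsto.of_mul_eventuallyEq {α 𝕜 : Type*} [NormedField 𝕜] {l : Filter α}
    {a b c : α → 𝕜} {β γ : 𝕜} (hb : Tendsto b l (𝓝 β)) (hβ : β ≠ 0) (hc : Tendsto c l (𝓝 γ))
    (habc : ∀ᶠ n in l, a n * b n = c n) : Tendsto a l (𝓝 (γ / β)) := by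
  refine (hc.div hb hβ).congr' ?_
  filter_upwards [habc, hb.eventually_ne hβ] with n hn hbn
  rw [Pi.div_apply, ← hn, mul_div_cancel_right₀ _ hbn]

theorem Complex.sum_exp_Icc_mul_sin (u : ℂ) (m : ℕ) :
    (∑ s ∈ Icc (-m : ℤ) m, exp (2 * s * u * I)) * sin u = sin ((2 * m + 1) * u) := by
  induction m with
  | zero => simp
  | succ m ih =>
    rw [Nat.cast_succ, sum_Icc_succ_eq_add_endpoints, add_mul, ih]
    have hcos : exp (2 * ((m + 1 : ℤ) : ℂ) * u * I) + exp (2 * ((-(m + 1) : ℤ) : ℂ) * u * I)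
        = 2 * cos (2 * (m + 1) * u) := by
      rw [two_cos]; push_cast; ring_nf
    rw [hcos, Nat.cast_succ, show (2 * ((m : ℂ) + 1) + 1) * u = 2 * (m + 1) * u + u by ring,
      show (2 * (m : ℂ) + 1) * u = 2 * (m + 1) * u - u by ring, sin_add, sin_sub]
    ring

noncomputable def lowPassKernel (p q : ℕ) (x : ℝ) (n : ℕ) : ℂ :=
  1 / (2 * (q : ℂ) * n) * ∑ s ∈ Icc (-((p * n : ℕ) : ℤ)) ((p * n : ℕ) : ℤ),
    exp (-(2 * (Real.pi : ℂ) * I) * ((x : ℂ) * (s : ℂ)) / (2 * (q : ℂ) * (n : ℂ)))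

theorem lowPassKernel_mul_sinc {p q n : ℕ} (hq : 0 < q) (hn : n ≠ 0) {x : ℝ} (hx : x ≠ 0) :
    lowPassKernel p q x n * (Real.pi * x * Real.sinc (Real.pi * x / (2 * q * n)) : ℝ)
      = (Real.sin (Real.pi * (p / q) * x + Real.pi * x / (2 * q * n)) : ℝ) := by
  set v : ℝ := Real.pi * x / (2 * q * n) with hv
  have hq' : (q : ℝ) ≠ 0 := by positivity
  have hn' : (n : ℝ) ≠ 0 := by positivity
  have hv0 : v ≠ 0 := by positivity
  have hsinc : Real.pi * x * Real.sinc v = 2 * q * n * Real.sin v := by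
    rw [Real.sinc_of_ne_zero hv0, hv]
    field_simp
  have hterm : ∀ s : ℤ, exp (-(2 * (Real.pi : ℂ) * I) * ((x : ℂ) * (s : ℂ)) / (2 * (q : ℂ) * n))
      = exp (2 * s * (-(v : ℂ)) * I) := by
    intro s; rw [hv]; push_cast; ring_nf
  have hdirichlet := sum_exp_Icc_mul_sin (-(v : ℂ)) (p * n)
  rw [sin_neg, mul_neg, mul_neg, sin_neg, neg_inj] at hdirichlet
  rw [lowPassKernel, sum_congr rfl fun s _ => hterm s, hsinc,
    show Real.pi * (p / q) * x + v = (2 * (p * n : ℕ) + 1) * v by rw [hv]; push_cast; field_simp]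
  push_cast at hdirichlet ⊢
  generalize (∑ s ∈ _, _ : ℂ) = S at hdirichlet ⊢
  rw [← hdirichlet]
  field_simp [Nat.cast_ne_zero.mpr hq.ne', Nat.cast_ne_zero.mpr hn]

theorem tendsto_lowPassKernel (p : ℕ) {q : ℕ} (hq : 0 < q) {x : ℝ} (hx : x ≠ 0) :
    Tendsto (lowPassKernel p q x) atTop
      (𝓝 ((Real.sin (Real.pi * (p / q) * x) / (Real.pi * x) : ℝ) : ℂ)) := by
  have hv : Tendsto (fun n : ℕ => Real.pi * x / (2 * q * n)) atTop (𝓝 0) := by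
    simpa only [div_div, mul_assoc] using
      tendsto_const_div_atTop_nhds_zero_nat (Real.pi * x / (2 * q))
  have hsinc : Tendsto (fun n : ℕ => Real.pi * x * Real.sinc (Real.pi * x / (2 * q * n))) atTop
      (𝓝 (Real.pi * x)) := by
    simpa only [Function.comp_def, Real.sinc_zero, mul_one] using
      ((Real.continuous_sinc.tendsto 0).comp hv).const_mul (Real.pi * x)
  have hsin : Tendsto (fun n : ℕ => Real.sin (Real.pi * (p / q) * x + Real.pi * x / (2 * q * n)))
      atTop (𝓝 (Real.sin (Real.pi * (p / q) * x))) := by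
    simpa only [Function.comp_def, add_zero] using
      (Real.continuous_sin.tendsto _).comp (tendsto_const_nhds.add hv)
  rw [ofReal_div]
  refine (tendsto_ofReal_iff.mpr hsinc).of_mul_eventuallyEq (by simp [hx, Real.pi_ne_zero])
    (tendsto_ofReal_iff.mpr hsin) ?_
  filter_upwards [eventually_ne_atTop 0] with n hn
  exact lowPassKernel_mul_sinc hq hn hx

theorem lowPassKernel_mul_lowPassKernel (p q : ℕ) (x y : ℝ) (n : ℕ) :
    lowPassKernel p q x n * lowPassKernel p q y n =
      (1 / (2 * (q : ℂ) * n)) ^ 2 *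
        ∑ s ∈ Icc (-((p * n : ℕ) : ℤ)) ((p * n : ℕ) : ℤ),
          ∑ t ∈ Icc (-((p * n : ℕ) : ℤ)) ((p * n : ℕ) : ℤ),
            exp (-(2 * (Real.pi : ℂ) * I) * ((x : ℂ) * (s : ℂ) + (y : ℂ) * (t : ℂ)) /
              (2 * (q : ℂ) * n)) := by
  rw [lowPassKernel, lowPassKernel, mul_mul_mul_comm, sum_mul_sum, ← sq]
  congr! 3 with s - t -
  rw [← exp_add]
  ring_nf

theorem stmt_13_general (p q : ℕ) (hq : 0 < q)
    (x y : ℝ) (hx : x ≠ 0) (hy : y ≠ 0) :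
    Filter.Tendsto
      (fun n : ℕ =>
        (1 / (2 * (q : ℂ) * (n : ℂ))) ^ 2 *
          ∑ s ∈ Finset.Icc (-((p * n : ℕ) : ℤ)) ((p * n : ℕ) : ℤ),
            ∑ t ∈ Finset.Icc (-((p * n : ℕ) : ℤ)) ((p * n : ℕ) : ℤ),
              Complex.exp (-(2 * (Real.pi : ℂ) * Complex.I) *
                ((x : ℂ) * (s : ℂ) + (y : ℂ) * (t : ℂ)) / (2 * (q : ℂ) * (n : ℂ))))
      Filter.atTop
      (nhds ((Real.sin (Real.pi * ((p : ℝ) / (q : ℝ)) * x) *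
              Real.sin (Real.pi * ((p : ℝ) / (q : ℝ)) * y) /
              (Real.pi ^ 2 * x * y) : ℝ) : ℂ)) := by
  convert (tendsto_lowPassKernel p hq hx).mul (tendsto_lowPassKernel p hq hy) using 2
  · exact (lowPassKernel_mul_lowPassKernel p q x y _).symm
  · push_cast
    ring

/-- Two-dimensional infinite-grid limit of the square low-pass filtering kernel: for positive
integers `p ≤ q` with `γ = p/q` and nonzero reals `x, y`, as `n → ∞`,
`(1/(2qn))² ∑_{s=-pn}^{pn} ∑_{t=-pn}^{pn} exp(-2πi(x·s + y·t)/(2qn))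
  → sin(πγx)·sin(πγy)/(π²·x·y)`,
i.e. the normalized low-pass convolution kernel converges pointwise to a 2D sinc function. -/
theorem stmt_13 (p q : ℕ) (hp : 0 < p) (hq : 0 < q) (hpq : p ≤ q)
    (x y : ℝ) (hx : x ≠ 0) (hy : y ≠ 0) :
    Filter.Tendsto
      (fun n : ℕ =>
        (1 / (2 * (q : ℂ) * (n : ℂ))) ^ 2 *
          ∑ s ∈ Finset.Icc (-((p * n : ℕ) : ℤ)) ((p * n : ℕ) : ℤ),
            ∑ t ∈ Finset.Icc (-((p * n : ℕ) : ℤ)) ((p * n : ℕ) : ℤ),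
              Complex.exp (-(2 * (Real.pi : ℂ) * Complex.I) *
                ((x : ℂ) * (s : ℂ) + (y : ℂ) * (t : ℂ)) / (2 * (q : ℂ) * (n : ℂ))))
      Filter.atTop
      (nhds ((Real.sin (Real.pi * ((p : ℝ) / (q : ℝ)) * x) *
              Real.sin (Real.pi * ((p : ℝ) / (q : ℝ)) * y) /
              (Real.pi ^ 2 * x * y) : ℝ) : ℂ)) :=
  stmt_13_general p q hq x y hx hy
end
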